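/- Let p ≥ 5 be prime and a ∈ (0,1) ∩ ℚ with v_p(a) = 0, and let a' be defined by a + i = p·a' where i ∈ {1,…,p−1} is the unique index with a + i ≡ 0 (mod p). Then for every r ≥ 1, (a)_{p^r}/(a')_{p^{r−1}} ≡ (1−a)_{p^r}/(1−a')_{p^{r−1}} (mod p^{p^{r−1}+2r}). -/

import Mathlib

/-!
Write `N = p^r` and `M = p^(r-1)`. The factors `a + k` of `(a)_N` with `k ≡ i (mod p)` are
`p (a' + j)` for `j < M`, so `(a)_N / (a')_M = p^M U(a)`, where `U(a)` is the product of the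
other factors, all `p`-adic units. The reflection `(1 - x)_n = (-1)^n (x - n)_n` (with `N`, `M`
odd) turns the other ratio into `p^M U(a - N)`, so it remains to show `U(a - N) ≡ U(a)` modulo
`p^(2r)`. To first order in `N`, `U(a - N) / U(a) = 1 - N ∑ 1/(a + k)`, and the sum vanishes
modulo `p^r`: pairing `k` with `e - k (mod N)`, where `e ≡ -2a (mod N)`, permutes the unit factors
and makes the inverses of each pair sum to `0 (mod N)`, while `2` is a unit since `p` is odd.
-/

open Finset

theorem ascPochhammer_eval_eq_prod_range {R : Type*} [CommSemiring R] (n : ℕ) (x : R) :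
    (ascPochhammer R n).eval x = ∏ k ∈ range n, (x + k) := by
  induction n with
  | zero => simp
  | succ n ih => rw [ascPochhammer_succ_eval, ih, prod_range_succ]

theorem ascPochhammer_eval_one_sub {R : Type*} [CommRing R] (n : ℕ) (x : R) :
    (ascPochhammer R n).eval (1 - x) = (-1) ^ n * (ascPochhammer R n).eval (x - n) := by
  rw [show 1 - x = -(x - 1) by ring, ascPochhammer_eval_neg_eq_descPochhammer,
    descPochhammer_eval_eq_ascPochhammer, sub_right_comm, sub_add_cancel]

/-- When `x + i ≡ 0 (mod p)`, these are the factors of `(x)_n` that are units at `p`. -/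
def pochhammerUnitPart {R : Type*} [CommSemiring R] (p i n : ℕ) (x : R) : R :=
  ∏ k ∈ (range n).filter (· % p ≠ i), (x + k)

theorem ascPochhammer_eval_mul_eq {R : Type*} [CommSemiring R] {p i : ℕ} (hi : i < p) {x y : R}
    (hxy : (p : R) * y = x + i) (n : ℕ) :
    (ascPochhammer R (p * n)).eval x =
      p ^ n * (ascPochhammer R n).eval y * pochhammerUnitPart p i (p * n) x := by
  have hp : 0 < p := by omega
  have hcong : ∏ k ∈ (range (p * n)).filter (· % p = i), (x + k) =
      ∏ j ∈ range n, (x + ((i + p * j : ℕ) : R)) := by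
    refine prod_nbij' (· / p) (i + p * ·) ?_ ?_ ?_ ?_ ?_
    · simp only [mem_filter, mem_range, and_imp]
      intro k hk _
      exact Nat.div_lt_of_lt_mul hk
    · simp only [mem_filter, mem_range, Nat.add_mul_mod_self_left, Nat.mod_eq_of_lt hi, and_true]
      intro j hj
      nlinarith
    · simp only [mem_filter, and_imp]
      intro k _ hk
      rw [← hk, Nat.mod_add_div]
    · intro j _
      simp [Nat.add_mul_div_left _ _ hp, Nat.div_eq_of_lt hi]
    · simp only [mem_filter, and_imp]
      intro k _ hk
      rw [← hk, Nat.mod_add_div]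
  rw [ascPochhammer_eval_eq_prod_range, ascPochhammer_eval_eq_prod_range, pochhammerUnitPart,
    ← prod_filter_mul_prod_filter_not (range (p * n)) (· % p = i), hcong]
  congr 1
  calc ∏ j ∈ range n, (x + ((i + p * j : ℕ) : R)) = ∏ j ∈ range n, (p * (y + j)) := by
        refine prod_congr rfl fun j _ => ?_
        rw [Nat.cast_add, ← add_assoc, ← hxy, Nat.cast_mul, mul_add]
    _ = p ^ n * ∏ j ∈ range n, (y + j) := by rw [prod_mul_distrib, prod_const, card_range]

theorem ascPochhammer_eval_mul_div_eq {K : Type*} [Field K] {p i : ℕ} (hi : i < p) {x y : K}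
    (hxy : (p : K) * y = x + i) {n : ℕ} (hy : (ascPochhammer K n).eval y ≠ 0) :
    (ascPochhammer K (p * n)).eval x / (ascPochhammer K n).eval y =
      p ^ n * pochhammerUnitPart p i (p * n) x := by
  rw [ascPochhammer_eval_mul_eq hi hxy, div_eq_iff hy]
  ring

theorem ascPochhammer_eval_ratCast_ne_zero {K : Type*} [Field K] [CharZero K] (n : ℕ) {x : ℚ}
    (hx : 0 < x) : (ascPochhammer K n).eval (x : K) ≠ 0 := by
  rw [← ascPochhammer_map (Rat.castHom K), Polynomial.eval_map, ← Rat.coe_castHom,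
    Polynomial.eval₂_at_apply]
  exact (Rat.cast_ne_zero).mpr (ascPochhammer_pos n x hx).ne'

theorem ascPochhammer_eval_ratCast_sub_ne_zero {K : Type*} [Field K] [CharZero K] (n : ℕ) {x : ℚ}
    (hx : x < 1) : (ascPochhammer K n).eval ((x : K) - n) ≠ 0 := by
  intro h
  apply ascPochhammer_eval_ratCast_ne_zero (K := K) n (sub_pos.mpr hx)
  rw [Rat.cast_sub, Rat.cast_one, ascPochhammer_eval_one_sub, h, mul_zero]

theorem ascPochhammer_eval_one_sub_div_eq {K : Type*} [Field K] {p : ℕ} (hp : Odd p) (n : ℕ)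
    (x y : K) :
    (ascPochhammer K (p * n)).eval (1 - x) / (ascPochhammer K n).eval (1 - y) =
      (ascPochhammer K (p * n)).eval (x - (p * n : ℕ)) / (ascPochhammer K n).eval (y - n) := by
  rw [ascPochhammer_eval_one_sub, ascPochhammer_eval_one_sub, pow_mul, hp.neg_one_pow,
    mul_div_mul_left _ _ (pow_ne_zero _ (neg_ne_zero.mpr one_ne_zero))]

theorem norm_prod_one_add_mul_sub_le {ι R : Type*} [NormedCommRing R] [NormOneClass R]
    [IsUltrametricDist R] {t : R} (ht : ‖t‖ ≤ 1) {z : ι → R} (s : Finset ι)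
    (hz : ∀ k ∈ s, ‖z k‖ ≤ 1) :
    ‖∏ k ∈ s, (1 + t * z k) - 1 - t * ∑ k ∈ s, z k‖ ≤ ‖t‖ ^ 2 := by
  classical
  induction s using Finset.induction_on with
  | empty => simp
  | insert a s ha ih =>
    have hza := hz a (mem_insert_self a s)
    have hzs : ∀ k ∈ s, ‖z k‖ ≤ 1 := fun k hk => hz k (mem_insert_of_mem hk)
    have hS : ‖∑ k ∈ s, z k‖ ≤ 1 :=
      IsUltrametricDist.norm_sum_le_of_forall_le_of_nonneg zero_le_one hzs
    have hfactor : ‖1 + t * z a‖ ≤ 1 := by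
      refine (IsUltrametricDist.norm_add_le_max _ _).trans (max_le norm_one.le ?_)
      exact (norm_mul_le _ _).trans (mul_le_one₀ ht (norm_nonneg _) hza)
    rw [prod_insert ha, sum_insert ha]
    calc ‖(1 + t * z a) * ∏ k ∈ s, (1 + t * z k) - 1 - t * (z a + ∑ k ∈ s, z k)‖
        = ‖(1 + t * z a) * (∏ k ∈ s, (1 + t * z k) - 1 - t * ∑ k ∈ s, z k)
            + t ^ 2 * (z a * ∑ k ∈ s, z k)‖ := by ring_nf
      _ ≤ ‖t‖ ^ 2 := by
        refine (IsUltrametricDist.norm_add_le_max _ _).trans (max_le ?_ ?_)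
        · calc _ ≤ ‖1 + t * z a‖ * ‖t‖ ^ 2 := (norm_mul_le _ _).trans (by gcongr; exact ih hzs)
            _ ≤ ‖t‖ ^ 2 := mul_le_of_le_one_left (by positivity) hfactor
        · calc _ ≤ ‖t‖ ^ 2 * (‖z a‖ * ‖∑ k ∈ s, z k‖) :=
              (norm_mul_le _ _).trans (by gcongr; exacts [norm_pow_le _ _, norm_mul_le _ _])
            _ ≤ ‖t‖ ^ 2 :=
              mul_le_of_le_one_right (by positivity) (mul_le_one₀ hza (norm_nonneg _) hS)

theorem norm_inv_add_inv_of_norm_eq_one {K : Type*} [NormedField K] {u v : K} (hu : ‖u‖ = 1)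
    (hv : ‖v‖ = 1) : ‖u⁻¹ + v⁻¹‖ = ‖u + v‖ := by
  rw [inv_add_inv (norm_ne_zero_iff.mp (by simp [hu])) (norm_ne_zero_iff.mp (by simp [hv])),
    norm_div, norm_mul, hu, hv, mul_one, div_one]

theorem natCast_zmod_eq_iff_mod_eq {p i k : ℕ} (hi : i < p) :
    (k : ZMod p) = i ↔ k % p = i := by
  rw [ZMod.natCast_eq_natCast_iff', Nat.mod_eq_of_lt hi]

theorem zmod_val_sub_mem_filter_mod_ne {p N i : ℕ} {e : ℤ} [NeZero N] (hpN : p ∣ N) (hi : i < p)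
    (he : (e : ZMod p) = 2 * i) {k : ℕ} (hk : k ∈ (range N).filter (· % p ≠ i)) :
    ((e - k : ZMod N)).val ∈ (range N).filter (· % p ≠ i) := by
  simp only [mem_filter, mem_range, ne_eq, ← natCast_zmod_eq_iff_mod_eq hi] at hk ⊢
  refine ⟨ZMod.val_lt _, fun h => hk.2 ?_⟩
  rw [← ZMod.cast_eq_val, ZMod.cast_sub hpN, ZMod.cast_natCast hpN, ZMod.cast_intCast hpN, he] at h
  linear_combination -h

theorem sum_filter_mod_ne_comp_reflect {M : Type*} [AddCommMonoid M] {p N i : ℕ} {e : ℤ} [NeZero N]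
    (hpN : p ∣ N) (hi : i < p) (he : (e : ZMod p) = 2 * i) (f : ℕ → M) :
    ∑ k ∈ (range N).filter (· % p ≠ i), f ((e - k : ZMod N)).val =
      ∑ k ∈ (range N).filter (· % p ≠ i), f k := by
  have hinv {k : ℕ} (hk : k ∈ (range N).filter (· % p ≠ i)) :
      ((e - ((e - k : ZMod N)).val : ZMod N)).val = k := by
    rw [ZMod.natCast_zmod_val, sub_sub_cancel, ZMod.val_natCast,
      Nat.mod_eq_of_lt (mem_range.mp (mem_filter.mp hk).1)]
  exact sum_nbij' _ _ (fun k hk => zmod_val_sub_mem_filter_mod_ne hpN hi he hk)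
    (fun k hk => zmod_val_sub_mem_filter_mod_ne hpN hi he hk) (fun k hk => hinv hk)
    (fun k hk => hinv hk) (fun _ _ => rfl)

section Padic

variable {p : ℕ} [Fact p.Prime]

theorem Padic.exists_natCast_norm_sub_le {x : ℚ_[p]} (hx : ‖x‖ ≤ 1) (n : ℕ) :
    ∃ c : ℕ, ‖x - c‖ ≤ (p : ℝ) ^ (-n : ℤ) :=
  ⟨PadicInt.appr ⟨x, hx⟩ n,
    (PadicInt.norm_le_pow_iff_mem_span_pow _ n).mpr (PadicInt.appr_spec n ⟨x, hx⟩)⟩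

theorem Padic.norm_add_natCast_eq_one {x : ℚ_[p]} {i k : ℕ} (hi : i < p) (hx : ‖x + i‖ < 1)
    (hk : k % p ≠ i) : ‖x + k‖ = 1 := by
  have hndvd : ¬ (p : ℤ) ∣ k - i := by
    rwa [← ZMod.intCast_zmod_eq_zero_iff_dvd, Int.cast_sub, Int.cast_natCast, Int.cast_natCast,
      sub_eq_zero, natCast_zmod_eq_iff_mod_eq hi]
  have hki : ‖((k - i : ℤ) : ℚ_[p])‖ = 1 :=
    le_antisymm (Padic.norm_int_le_one _) (not_lt.mp (mt Padic.norm_intCast_lt_one_iff.mp hndvd))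
  calc ‖x + k‖ = ‖((k - i : ℤ) : ℚ_[p]) + (x + i)‖ := by push_cast; ring_nf
    _ = 1 := by
      rw [IsUltrametricDist.norm_add_eq_max_of_norm_ne_norm (by rw [hki]; exact hx.ne'), hki,
        max_eq_left hx.le]

theorem Padic.exists_intCast_norm_two_mul_add_le {x : ℚ_[p]} {i : ℕ} (hx : ‖x + i‖ < 1) {r : ℕ}
    (hr : r ≠ 0) : ∃ e : ℤ, (e : ZMod p) = 2 * i ∧ ‖2 * x + e‖ ≤ (p : ℝ) ^ (-r : ℤ) := by
  obtain ⟨d, hd⟩ := Padic.exists_natCast_norm_sub_le hx.le r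
  have hd_lt : ‖x + i - d‖ < 1 :=
    hd.trans_lt (zpow_lt_one_of_neg₀ (mod_cast (Fact.out : p.Prime).one_lt) (by omega))
  have hpd : (d : ZMod p) = 0 := by
    rw [ZMod.natCast_eq_zero_iff, ← Padic.norm_natCast_lt_one_iff]
    calc ‖(d : ℚ_[p])‖ = ‖(x + i) + -(x + i - d)‖ := by ring_nf
      _ < 1 := (IsUltrametricDist.norm_add_le_max _ _).trans_lt (max_lt hx (by rwa [norm_neg]))
  refine ⟨2 * (i - d), by push_cast; rw [hpd, sub_zero], ?_⟩
  calc ‖2 * x + ((2 * (i - d) : ℤ) : ℚ_[p])‖ = ‖2 * (x + i - d)‖ := by push_cast; ring_nf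
    _ ≤ (p : ℝ) ^ (-r : ℤ) := (norm_mul_le _ _).trans ((mul_le_of_le_one_left (norm_nonneg _)
      (by simpa using IsUltrametricDist.norm_natCast_le_one ℚ_[p] 2)).trans hd)

theorem Padic.norm_inv_add_inv_le {x : ℚ_[p]} {e : ℤ} {r : ℕ}
    (he : ‖2 * x + e‖ ≤ (p : ℝ) ^ (-r : ℤ)) {k l : ℕ} (hk : ‖x + k‖ = 1) (hl : ‖x + l‖ = 1)
    (hkl : ((k + l : ℕ) : ZMod (p ^ r)) = e) :
    ‖(x + k)⁻¹ + (x + l)⁻¹‖ ≤ (p : ℝ) ^ (-r : ℤ) := by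
  have hdvd : ((p ^ r : ℕ) : ℤ) ∣ k + l - e := by
    rw [← ZMod.intCast_zmod_eq_zero_iff_dvd, Int.cast_sub, ← hkl]
    push_cast
    ring
  rw [norm_inv_add_inv_of_norm_eq_one hk hl]
  calc ‖x + k + (x + l)‖ = ‖(2 * x + e) + ((k + l - e : ℤ) : ℚ_[p])‖ := by push_cast; ring_nf
    _ ≤ (p : ℝ) ^ (-r : ℤ) := (IsUltrametricDist.norm_add_le_max _ _).trans
      (max_le he ((Padic.norm_int_le_pow_iff_dvd _ _).mpr (mod_cast hdvd)))

theorem Padic.norm_sum_inv_add_natCast_le (hp : p ≠ 2) {x : ℚ_[p]} {i : ℕ} (hi : i < p)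
    (hx : ‖x + i‖ < 1) {r : ℕ} (hr : r ≠ 0) :
    ‖∑ k ∈ (range (p ^ r)).filter (· % p ≠ i), (x + k)⁻¹‖ ≤ (p : ℝ) ^ (-r : ℤ) := by
  have : NeZero (p ^ r) := ⟨pow_ne_zero _ (Fact.out : p.Prime).ne_zero⟩
  obtain ⟨e, he_p, he⟩ := Padic.exists_intCast_norm_two_mul_add_le hx hr
  have h2 : ‖(2 : ℚ_[p])‖ = 1 := by
    simpa using
      Padic.norm_natCast_eq_one_iff.mpr ((Nat.coprime_primes Fact.out Nat.prime_two).mpr hp)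
  have hpair : ∀ k ∈ (range (p ^ r)).filter (· % p ≠ i),
      ‖(x + k)⁻¹ + (x + (e - k : ZMod (p ^ r)).val)⁻¹‖ ≤ (p : ℝ) ^ (-r : ℤ) := fun k hk =>
    Padic.norm_inv_add_inv_le he (Padic.norm_add_natCast_eq_one hi hx (mem_filter.mp hk).2)
      (Padic.norm_add_natCast_eq_one hi hx
        (mem_filter.mp (zmod_val_sub_mem_filter_mod_ne (dvd_pow_self p hr) hi he_p hk)).2)
      (by push_cast; rw [ZMod.natCast_val, ZMod.cast_id', id, add_sub_cancel])
  calc ‖∑ k ∈ (range (p ^ r)).filter (· % p ≠ i), (x + k)⁻¹‖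
      = ‖2 * ∑ k ∈ (range (p ^ r)).filter (· % p ≠ i), (x + k)⁻¹‖ := by rw [norm_mul, h2, one_mul]
    _ = ‖∑ k ∈ (range (p ^ r)).filter (· % p ≠ i),
          ((x + k)⁻¹ + (x + (e - k : ZMod (p ^ r)).val)⁻¹)‖ := by
      rw [sum_add_distrib, sum_filter_mod_ne_comp_reflect (dvd_pow_self p hr) hi he_p
        (fun k : ℕ => (x + k)⁻¹), two_mul]
    _ ≤ _ := IsUltrametricDist.norm_sum_le_of_forall_le_of_nonneg (by positivity) hpair

theorem Padic.norm_pochhammerUnitPart_sub_le (hp : p ≠ 2) {x : ℚ_[p]} {i : ℕ} (hi : i < p)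
    (hx : ‖x + i‖ < 1) {r : ℕ} (hr : r ≠ 0) :
    ‖pochhammerUnitPart p i (p ^ r) x - pochhammerUnitPart p i (p ^ r) (x - (p ^ r : ℕ))‖ ≤
      (p : ℝ) ^ (-(2 * r : ℤ)) := by
  set s := (range (p ^ r)).filter (· % p ≠ i)
  set t : ℚ_[p] := -(p ^ r : ℕ)
  have hunit : ∀ k ∈ s, ‖x + k‖ = 1 := fun k hk =>
    Padic.norm_add_natCast_eq_one hi hx (mem_filter.mp hk).2
  have ht : ‖t‖ = (p : ℝ) ^ (-r : ℤ) := by simp [t]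
  have hfactor : pochhammerUnitPart p i (p ^ r) (x - (p ^ r : ℕ)) =
      pochhammerUnitPart p i (p ^ r) x * ∏ k ∈ s, (1 + t * (x + k)⁻¹) := by
    rw [pochhammerUnitPart, pochhammerUnitPart, ← prod_mul_distrib]
    refine prod_congr rfl fun k hk => ?_
    have : x + k ≠ 0 := norm_ne_zero_iff.mp (by rw [hunit k hk]; exact one_ne_zero)
    field_simp
    ring
  have hU : ‖pochhammerUnitPart p i (p ^ r) x‖ = 1 := by
    rw [pochhammerUnitPart, norm_prod, prod_eq_one hunit]
  have hsq : (p : ℝ) ^ (-(2 * r : ℤ)) = (p : ℝ) ^ (-r : ℤ) * (p : ℝ) ^ (-r : ℤ) := by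
    rw [← zpow_add₀ (mod_cast (Fact.out : p.Prime).ne_zero)]
    ring_nf
  have hz : ∀ k ∈ s, ‖(x + k)⁻¹‖ ≤ 1 := fun k hk => by rw [norm_inv, hunit k hk, inv_one]
  have hS := Padic.norm_sum_inv_add_natCast_le hp hi hx hr
  have ht1 : ‖t‖ ≤ 1 :=
    ht ▸ zpow_le_one_of_nonpos₀ (mod_cast (Fact.out : p.Prime).one_le) (by omega)
  rw [hfactor, ← mul_one_sub, norm_mul, hU, one_mul]
  calc ‖1 - ∏ k ∈ s, (1 + t * (x + k)⁻¹)‖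
      = ‖-(∏ k ∈ s, (1 + t * (x + k)⁻¹) - 1 - t * ∑ k ∈ s, (x + k)⁻¹)
          + -(t * ∑ k ∈ s, (x + k)⁻¹)‖ := by ring_nf
    _ ≤ (p : ℝ) ^ (-(2 * r : ℤ)) := by
      refine (IsUltrametricDist.norm_add_le_max _ _).trans (max_le ?_ ?_)
      · rw [norm_neg, hsq, ← sq, ← ht]
        exact norm_prod_one_add_mul_sub_le ht1 s hz
      · rw [norm_neg, norm_mul, ht, hsq]
        gcongr

end Padic

theorem pochhammer_ratio_reflection_general (p : ℕ) [Fact p.Prime] (hp : 5 ≤ p)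
    (a a' : ℚ) (h0 : 0 < a) (h1 : a < 1)
    (i : ℕ) (hi2 : i ≤ p - 1)
    (hdef : (p : ℚ) * a' = a + i) (hdvd : ‖((a : ℚ_[p]) + i)‖ ≤ ((p : ℝ))⁻¹)
    (r : ℕ) (hr : 1 ≤ r) :
    ‖(ascPochhammer ℚ_[p] (p ^ r)).eval (a : ℚ_[p]) /
          (ascPochhammer ℚ_[p] (p ^ (r - 1))).eval (a' : ℚ_[p]) -
        (ascPochhammer ℚ_[p] (p ^ r)).eval (1 - (a : ℚ_[p])) /
          (ascPochhammer ℚ_[p] (p ^ (r - 1))).eval (1 - (a' : ℚ_[p]))‖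
      ≤ (p : ℝ) ^ (-((p : ℤ) ^ (r - 1) + 2 * r)) := by
  have hprime : p.Prime := Fact.out
  have hi : i < p := by omega
  have hN : p ^ r = p * p ^ (r - 1) := by rw [← pow_succ', Nat.sub_add_cancel hr]
  have hxy : (p : ℚ_[p]) * a' = a + i := by exact_mod_cast congrArg ((↑) : ℚ → ℚ_[p]) hdef
  have hxy' : (p : ℚ_[p]) * (a' - (p ^ (r - 1) : ℕ)) = (a - (p * p ^ (r - 1) : ℕ)) + i := by
    push_cast; linear_combination hxy
  have ha' : 0 < a' ∧ a' < 1 := by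
    have : (i : ℚ) + 1 ≤ p := by exact_mod_cast hi
    constructor <;> nlinarith
  rw [hN, ascPochhammer_eval_one_sub_div_eq (hprime.odd_of_ne_two (by omega)),
    ascPochhammer_eval_mul_div_eq hi hxy (ascPochhammer_eval_ratCast_ne_zero _ ha'.1),
    ascPochhammer_eval_mul_div_eq hi hxy' (ascPochhammer_eval_ratCast_sub_ne_zero _ ha'.2), ← hN,
    ← mul_sub, norm_mul, Padic.norm_p_pow]
  calc _ ≤ (p : ℝ) ^ (-(p ^ (r - 1) : ℕ) : ℤ) * (p : ℝ) ^ (-(2 * r : ℤ)) := by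
        gcongr
        exact Padic.norm_pochhammerUnitPart_sub_le (by omega) hi
          (hdvd.trans_lt (inv_lt_one_of_one_lt₀ (mod_cast hprime.one_lt))) (by omega)
    _ = _ := by
        rw [← zpow_add₀ (mod_cast hprime.ne_zero)]
        push_cast
        ring_nf

/-- For `p ≥ 5` prime, `a ∈ (0,1) ∩ ℚ` a `p`-adic unit, `a'` defined by
`p a' = a + i` with `i ∈ {1,…,p-1}` and `p ∣ a + i`, and `r ≥ 1`:
`(a)_{p^r}/(a')_{p^{r-1}} ≡ (1-a)_{p^r}/(1-a')_{p^{r-1}} (mod p^{p^{r-1}+2r})`. -/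
theorem pochhammer_ratio_reflection (p : ℕ) [Fact p.Prime] (hp : 5 ≤ p)
    (a a' : ℚ) (h0 : 0 < a) (h1 : a < 1) (hunit : ‖(a : ℚ_[p])‖ = 1)
    (i : ℕ) (hi1 : 1 ≤ i) (hi2 : i ≤ p - 1)
    (hdef : (p : ℚ) * a' = a + i) (hdvd : ‖((a : ℚ_[p]) + i)‖ ≤ ((p : ℝ))⁻¹)
    (r : ℕ) (hr : 1 ≤ r) :
    ‖(ascPochhammer ℚ_[p] (p ^ r)).eval (a : ℚ_[p]) /
          (ascPochhammer ℚ_[p] (p ^ (r - 1))).eval (a' : ℚ_[p]) -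
        (ascPochhammer ℚ_[p] (p ^ r)).eval (1 - (a : ℚ_[p])) /
          (ascPochhammer ℚ_[p] (p ^ (r - 1))).eval (1 - (a' : ℚ_[p]))‖
      ≤ (p : ℝ) ^ (-((p : ℤ) ^ (r - 1) + 2 * r)) :=
  pochhammer_ratio_reflection_general p hp a a' h0 h1 i hi2 hdef hdvd r hr
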